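/- Let Φ be a Young function of class Δ₂ ∩ ∇₂ admitting the representation Φ(t) = ∫₀ᵗ φ(s) ds, where φ: [0,∞) → [0,∞) is nondecreasing, right-continuous, φ(0)=0, φ(s)>0 for s>0, and φ(s) → +∞ as s → +∞. Let f: ℝ³ × ℝ^{3×3} → ℝ be a Carathéodory function satisfying (H1) and (H2). Then there exists a constant C>0 such that for every linear subspace V ⊆ ℝ³ and all ξ_α, ξ_α' ∈ V²: |Tf⁰hom(V, ξ_α) − Tf⁰hom(V, ξ_α')| ≤ C·|ξ_α − ξ_α'|·(1 + φ(|ξ_α| + |ξ_α'|)). -/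

import Mathlib

open MeasureTheory Filter

noncomputable section

abbrev V3 : Type := Fin 3 → ℝ
abbrev V2 : Type := Fin 2 → ℝ
abbrev M33 : Type := Matrix (Fin 3) (Fin 3) ℝ
abbrev M32 : Type := Matrix (Fin 3) (Fin 2) ℝ

/-- `Φ : [0,∞) → [0,∞)` is a Young function: continuous, convex, positive for `t > 0`,
`Φ(t)/t → 0` as `t → 0⁺` and `Φ(t)/t → ∞` as `t → ∞`. -/
def IsYoung (Φ : ℝ → ℝ) : Prop :=
  ContinuousOn Φ (Set.Ici 0) ∧ ConvexOn ℝ (Set.Ici 0) Φ ∧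
  (∀ t : ℝ, 0 < t → 0 < Φ t) ∧
  Tendsto (fun t => Φ t / t) (nhdsWithin 0 (Set.Ioi 0)) (nhds 0) ∧
  Tendsto (fun t => Φ t / t) atTop atTop

/-- The Δ₂ condition (at infinity). -/
def Delta2 (Φ : ℝ → ℝ) : Prop :=
  ∃ α : ℝ, 0 < α ∧ ∃ t₀ : ℝ, 0 ≤ t₀ ∧ ∀ t, t₀ ≤ t → Φ (2 * t) ≤ α * Φ t

/-- The ∇₂ condition. -/
def Nabla2 (Φ : ℝ → ℝ) : Prop :=
  ∃ β : ℝ, 0 < β ∧ ∃ t₀ : ℝ, 1 < t₀ ∧ ∀ t, t₀ ≤ t → Φ t ≤ (1 / (2 * β)) * Φ (β * t)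

/-- Frobenius norm of a real matrix. -/
def frobNorm {m n : ℕ} (ξ : Matrix (Fin m) (Fin n) ℝ) : ℝ :=
  Real.sqrt (∑ i, ∑ j, (ξ i j) ^ 2)

/-- The open cylinder `(tQ')₁ = (−t/2,t/2)² × (−1/2,1/2)`. -/
def openCyl (t : ℝ) : Set V3 := {x | |x 0| < t / 2 ∧ |x 1| < t / 2 ∧ |x 2| < 1 / 2}

/-- The lateral boundary `∂((−t/2,t/2)²) × (−1/2,1/2)`. -/
def latBdry (t : ℝ) : Set V3 := {x | max |x 0| |x 1| = t / 2 ∧ |x 2| < 1 / 2}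

/-- The (a.e. defined, via Rademacher) matrix of partial derivatives of a Lipschitz map:
row `i`, column `j` is `∂φᵢ/∂xⱼ`. -/
def gradm (φ : V3 → V3) (x : V3) : M33 :=
  Matrix.of fun i j => fderiv ℝ φ x (Pi.single j 1) i

/-- Planar-gradient matrix (3×2) of a map on `ℝ²`. -/
def gradm2 (ψ : V2 → V3) (y : V2) : M32 :=
  Matrix.of fun i j => fderiv ℝ ψ y (Pi.single j 1) i

/-- The 3×3 matrix `(ξ_α + ∇_αφ | ∇₃φ)`: first two columns of `A` shifted by `ξ_α`,
third column untouched. -/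
def withCol (ξα : M32) (A : M33) : M33 :=
  Matrix.of fun i j => (if h : (j : ℕ) < 2 then ξα i ⟨(j : ℕ), h⟩ else 0) + A i j

/-- The admissible class `𝒜_t`: Lipschitz maps vanishing on the lateral boundary. -/
def AdmSet (t : ℝ) : Set (V3 → V3) :=
  {φ | (∃ K : NNReal, LipschitzWith K φ) ∧ ∀ x ∈ latBdry t, φ x = 0}

/-- The constrained admissible class `𝒜_t(V)`: members of `𝒜_t` with values in `V`. -/
def AdmVSet (t : ℝ) (V : Submodule ℝ V3) : Set (V3 → V3) :=
  {φ | φ ∈ AdmSet t ∧ ∀ x, φ x ∈ V}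

/-- The cell energy `∫_{(tQ')₁} f(x, (ξ_α + ∇_αφ | ∇₃φ)) dx`. -/
def cellE (f : V3 → M33 → ℝ) (ξα : M32) (t : ℝ) (φ : V3 → V3) : ℝ :=
  ∫ x in openCyl t, f x (withCol ξα (gradm φ x))

/-- The cell infimum over a class `S` of test maps. -/
def cellInf (f : V3 → M33 → ℝ) (ξα : M32) (t : ℝ) (S : Set (V3 → V3)) : ℝ :=
  sInf ((fun φ => cellE f ξα t φ) '' S)

/-- The constrained tangentially homogenized density `Tf⁰hom(V, ξ_α)`. -/
def Tf0hom (f : V3 → M33 → ℝ) (V : Submodule ℝ V3) (ξα : M32) : ℝ :=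
  liminf (fun t : ℝ => (t ^ 2)⁻¹ * cellInf f ξα t (AdmVSet t V)) atTop

/-- The unconstrained homogenized density (liminf of the scaled cell infima over `𝒜_t`). -/
def homDens (f : V3 → M33 → ℝ) (ξα : M32) : ℝ :=
  liminf (fun t : ℝ => (t ^ 2)⁻¹ * cellInf f ξα t (AdmSet t)) atTop

/-- `P` is the orthogonal projection of `ℝ³` onto the subspace `V` (with respect to the
Euclidean inner product). -/
def IsOrthProjOnto (V : Submodule ℝ V3) (P : V3 → V3) : Prop :=
  IsLinearMap ℝ P ∧ (∀ x, P x ∈ V) ∧ (∀ x ∈ V, P x = x) ∧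
    (∀ x : V3, ∀ v ∈ V, (∑ i, (x i - P x i) * v i) = 0)

/-- Column-wise action `𝐏ξ = (Pξ₁ | Pξ₂ | Pξ₃)` of a projection on 3×3 matrices. -/
def Pmat (P : V3 → V3) (ξ : M33) : M33 :=
  Matrix.of fun i j => P (fun k => ξ k j) i

/-- The penalized integrand `f̄(x,ξ) = f(x,𝐏ξ) + Φ(|ξ − 𝐏ξ|)`. -/
def fbar (Φ : ℝ → ℝ) (P : V3 → V3) (f : V3 → M33 → ℝ) : V3 → M33 → ℝ :=
  fun x ξ => f x (Pmat P ξ) + Φ (frobNorm (ξ - Pmat P ξ))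

/-- Carathéodory function: measurable in `x`, continuous in `ξ`. -/
def Caratheodory (f : V3 → M33 → ℝ) : Prop :=
  (∀ ξ, Measurable fun x => f x ξ) ∧ (∀ x, Continuous fun ξ => f x ξ)

/-- (H1): 1-periodicity in the planar variable. -/
def H1per (f : V3 → M33 → ℝ) : Prop :=
  ∀ (x : V3) (ξ : M33) (i : Fin 3), (i : ℕ) < 2 → f (x + Pi.single i 1) ξ = f x ξ

/-- (H2): `Φ`-coercivity and `Φ`-growth, for a.e. `x` and all `ξ`. -/
def H2growth (Φ : ℝ → ℝ) (α β : ℝ) (f : V3 → M33 → ℝ) : Prop :=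
  ∀ᵐ x : V3 ∂volume, ∀ ξ : M33, α * Φ (frobNorm ξ) ≤ f x ξ ∧ f x ξ ≤ β * (1 + Φ (frobNorm ξ))

/-- `ξ_α ∈ V²`: both columns of the 3×2 matrix belong to `V`. -/
def colsIn (V : Submodule ℝ V3) (ξα : M32) : Prop :=
  ∀ j : Fin 2, (fun i => ξα i j) ∈ V

/-- The open unit square `Q' = (−1/2,1/2)²`. -/
def sq2 : Set V2 := {y | |y 0| < 1 / 2 ∧ |y 1| < 1 / 2}

/-!
Let `φ'` be an almost optimal test map for `ξα'` on the cell of side `s = (1 - θ) t`. Clamping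
the planar variables to `[-s/2, s/2]` and adding `η(x) (ξα' - ξα) x_α`, where the cutoff `η` is `1`
on the inner cell and `0` on the lateral boundary of the cell of side `t`, gives a map admissible
for `ξα` on the larger cell. On the inner cell its energy is that of `φ'`; on the frame, whose
area is `t² - s²`, its gradient is bounded by `|ξα| + 6 |ξα' - ξα| (1 + 1/θ)`, so (H2) bounds the
extra energy there by `β (1 + Φ(R)) (t² - s²)`. Dividing by `t²` and passing to the liminf,
`Tf⁰hom(V, ξα) ≤ Tf⁰hom(V, ξα') + 2θ β (1 + Φ(R))`. The choice `θ = |ξα - ξα'| / (2 (1 + S))`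
with `S = |ξα| + |ξα'|` keeps `R ≤ 19 (1 + S)`, and `Φ(r) ≤ r φ(r)` together with the doubling
`φ(19 (1 + S)) ≤ C (1 + φ(S))` inherited from `Δ₂` turns the error into
`C' |ξα - ξα'| (1 + φ(S))`.
-/

open Set
open scoped Matrix

section Frobenius

variable {m n : ℕ}

attribute [local instance] Matrix.frobeniusNormedAddCommGroup

lemma frobNorm_eq_norm (A : Matrix (Fin m) (Fin n) ℝ) : frobNorm A = ‖A‖ := by
  rw [Matrix.frobenius_norm_def, frobNorm, Real.sqrt_eq_rpow]
  norm_num [Real.norm_eq_abs, sq_abs]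

lemma frobNorm_nonneg (A : Matrix (Fin m) (Fin n) ℝ) : 0 ≤ frobNorm A :=
  Real.sqrt_nonneg _

lemma frobNorm_add_le (A B : Matrix (Fin m) (Fin n) ℝ) :
    frobNorm (A + B) ≤ frobNorm A + frobNorm B := by
  simpa only [frobNorm_eq_norm] using norm_add_le A B

lemma frobNorm_sub_comm (A B : Matrix (Fin m) (Fin n) ℝ) :
    frobNorm (A - B) = frobNorm (B - A) := by
  simpa only [frobNorm_eq_norm] using norm_sub_rev A B

lemma frobNorm_sub_le (A B : Matrix (Fin m) (Fin n) ℝ) :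
    frobNorm (A - B) ≤ frobNorm A + frobNorm B := by
  simpa only [frobNorm_eq_norm] using norm_sub_le A B

lemma frobNorm_sub_eq_zero_iff {A B : Matrix (Fin m) (Fin n) ℝ} :
    frobNorm (A - B) = 0 ↔ A = B := by
  rw [frobNorm_eq_norm, norm_sub_eq_zero_iff]

end Frobenius

lemma abs_apply_le_frobNorm {m n : ℕ} (A : Matrix (Fin m) (Fin n) ℝ) (i : Fin m) (j : Fin n) :
    |A i j| ≤ frobNorm A := by
  rw [← Real.sqrt_sq_eq_abs]
  refine Real.sqrt_le_sqrt ?_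
  calc A i j ^ 2 ≤ ∑ j', A i j' ^ 2 :=
        Finset.single_le_sum (fun j' _ => sq_nonneg (A i j')) (Finset.mem_univ j)
    _ ≤ ∑ i', ∑ j', A i' j' ^ 2 :=
        Finset.single_le_sum (f := fun i' => ∑ j', A i' j' ^ 2)
          (fun i' _ => Finset.sum_nonneg fun j' _ => sq_nonneg _) (Finset.mem_univ i)

lemma frobNorm_le_of_abs_apply_le {m n : ℕ} {A : Matrix (Fin m) (Fin n) ℝ} {K : ℝ}
    (hK : 0 ≤ K) (h : ∀ i j, |A i j| ≤ K) : frobNorm A ≤ √(m * n) * K := by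
  rw [← Real.sqrt_sq hK, ← Real.sqrt_mul (by positivity)]
  refine Real.sqrt_le_sqrt ?_
  calc ∑ i, ∑ j, A i j ^ 2 ≤ ∑ _i : Fin m, ∑ _j : Fin n, K ^ 2 := by
        refine Finset.sum_le_sum fun i _ => Finset.sum_le_sum fun j _ => ?_
        exact sq_le_sq' (abs_le.1 (h i j)).1 (abs_le.1 (h i j)).2
    _ = m * n * K ^ 2 := by simp [mul_assoc]

structure HasMonotoneDensity (Φ φ : ℝ → ℝ) : Prop where
  eq_integral : ∀ t, 0 ≤ t → Φ t = ∫ s in (0:ℝ)..t, φ s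
  density_mono : MonotoneOn φ (Ici 0)
  density_zero : φ 0 = 0

namespace HasMonotoneDensity

variable {Φ φ : ℝ → ℝ}

lemma density_nonneg (h : HasMonotoneDensity Φ φ) {s : ℝ} (hs : 0 ≤ s) : 0 ≤ φ s :=
  h.density_zero ▸ h.density_mono self_mem_Ici hs hs

lemma intervalIntegrable (h : HasMonotoneDensity Φ φ) {a b : ℝ} (ha : 0 ≤ a) (hb : 0 ≤ b) :
    IntervalIntegrable φ volume a b :=
  (h.density_mono.mono fun _ hx => (le_inf ha hb).trans hx.1).intervalIntegrable

lemma eq_add_integral (h : HasMonotoneDensity Φ φ) {a b : ℝ} (ha : 0 ≤ a) (hab : a ≤ b) :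
    Φ b = Φ a + ∫ s in a..b, φ s := by
  rw [h.eq_integral a ha, h.eq_integral b (ha.trans hab),
    intervalIntegral.integral_add_adjacent_intervals (h.intervalIntegrable le_rfl ha)
      (h.intervalIntegrable ha (ha.trans hab))]

lemma nonneg (h : HasMonotoneDensity Φ φ) {t : ℝ} (ht : 0 ≤ t) : 0 ≤ Φ t := by
  rw [h.eq_integral t ht]
  exact intervalIntegral.integral_nonneg ht fun s hs => h.density_nonneg hs.1

lemma monotoneOn (h : HasMonotoneDensity Φ φ) : MonotoneOn Φ (Ici 0) := by
  intro a ha b _ hab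
  rw [h.eq_add_integral ha hab]
  exact le_add_of_nonneg_right
    (intervalIntegral.integral_nonneg hab fun s hs => h.density_nonneg (le_trans ha hs.1))

lemma le_mul_density (h : HasMonotoneDensity Φ φ) {t : ℝ} (ht : 0 ≤ t) : Φ t ≤ t * φ t := by
  rw [h.eq_integral t ht]
  calc ∫ s in (0:ℝ)..t, φ s ≤ ∫ _s in (0:ℝ)..t, φ t :=
        intervalIntegral.integral_mono_on ht (h.intervalIntegrable le_rfl ht)
          intervalIntegrable_const fun s hs => h.density_mono hs.1 (le_trans hs.1 hs.2) hs.2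
    _ = t * φ t := by simp

lemma mul_density_le (h : HasMonotoneDensity Φ φ) {t : ℝ} (ht : 0 ≤ t) : t * φ t ≤ Φ (2 * t) := by
  have hsplit := h.eq_add_integral ht (by linarith : t ≤ 2 * t)
  have hint : ∫ _s in t..2 * t, φ t ≤ ∫ s in t..2 * t, φ s :=
    intervalIntegral.integral_mono_on (by linarith) intervalIntegrable_const
      (h.intervalIntegrable ht (by linarith)) fun s hs => h.density_mono ht (ht.trans hs.1) hs.1
  have hconst : ∫ _s in t..2 * t, φ t = t * φ t := by
    rw [intervalIntegral.integral_const, smul_eq_mul]; ring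
  linarith [h.nonneg ht]

end HasMonotoneDensity

lemma Delta2.exists_two_pow_mul_le {Φ : ℝ → ℝ} (hΔ : Delta2 Φ) :
    ∃ a, 0 < a ∧ ∃ t₀, 0 ≤ t₀ ∧ ∀ (k : ℕ) (t : ℝ), t₀ ≤ t → Φ (2 ^ k * t) ≤ a ^ k * Φ t := by
  obtain ⟨a, ha, t₀, ht₀, hd⟩ := hΔ
  refine ⟨a, ha, t₀, ht₀, fun k => ?_⟩
  induction k with
  | zero => simp
  | succ k ih =>
    intro t ht
    have hle : t₀ ≤ 2 ^ k * t :=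
      ht.trans (le_mul_of_one_le_left (ht₀.trans ht) (one_le_pow₀ one_le_two))
    calc Φ (2 ^ (k + 1) * t) = Φ (2 * (2 ^ k * t)) := by ring_nf
      _ ≤ a * Φ (2 ^ k * t) := hd _ hle
      _ ≤ a * (a ^ k * Φ t) := by gcongr; exact ih t ht
      _ = a ^ (k + 1) * Φ t := by ring

lemma HasMonotoneDensity.exists_density_le_of_delta2 {Φ φ : ℝ → ℝ} (h : HasMonotoneDensity Φ φ)
    (hΔ : Delta2 Φ) {c : ℝ} (hc : 0 ≤ c) :
    ∃ C, 0 < C ∧ ∀ s, 0 ≤ s → φ (c * (s + 1)) ≤ C * (1 + φ s) := by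
  obtain ⟨a, ha, t₀, ht₀, hpow⟩ := hΔ.exists_two_pow_mul_le
  obtain ⟨k, hk⟩ := pow_unbounded_of_one_lt (2 * c) one_lt_two
  set s₁ := max t₀ 1
  have hlarge : ∀ s, s₁ ≤ s → φ (c * (s + 1)) ≤ a ^ (k + 1) * φ s := by
    intro s hs
    have hs1 : 1 ≤ s := (le_max_right _ _).trans hs
    have hs0 : 0 < s := one_pos.trans_le hs1
    have h2k : (1 : ℝ) ≤ 2 ^ k := one_le_pow₀ one_le_two
    have hchain : 2 ^ k * s * φ (2 ^ k * s) ≤ a ^ (k + 1) * (s * φ s) :=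
      calc 2 ^ k * s * φ (2 ^ k * s) ≤ Φ (2 * (2 ^ k * s)) := h.mul_density_le (by positivity)
        _ = Φ (2 ^ (k + 1) * s) := by ring_nf
        _ ≤ a ^ (k + 1) * Φ s := hpow (k + 1) s ((le_max_left _ _).trans hs)
        _ ≤ a ^ (k + 1) * (s * φ s) := by gcongr; exact h.le_mul_density hs0.le
    have hmono : φ (c * (s + 1)) ≤ φ (2 ^ k * s) :=
      h.density_mono (mem_Ici.2 (by positivity)) (mem_Ici.2 (by positivity)) (by nlinarith)
    have hpos : 0 ≤ φ (2 ^ k * s) := h.density_nonneg (by positivity)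
    have hcancel : 2 ^ k * φ (2 ^ k * s) ≤ a ^ (k + 1) * φ s :=
      le_of_mul_le_mul_left (by linarith) hs0
    nlinarith
  have hφ₁ : 0 ≤ φ (c * (s₁ + 1)) := h.density_nonneg (by positivity)
  refine ⟨a ^ (k + 1) + φ (c * (s₁ + 1)), by positivity, fun s hs => ?_⟩
  have hφs : 0 ≤ φ s := h.density_nonneg hs
  rcases le_total s₁ s with hs₁ | hs₁
  · nlinarith [hlarge s hs₁, pow_pos ha (k + 1)]
  · have : φ (c * (s + 1)) ≤ φ (c * (s₁ + 1)) :=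
      h.density_mono (mem_Ici.2 (by positivity)) (mem_Ici.2 (by positivity)) (by gcongr)
    nlinarith [pow_pos ha (k + 1)]

lemma Caratheodory.measurable_comp {f : V3 → M33 → ℝ} (hf : Caratheodory f) {g : V3 → M33}
    (hg : ∀ i j, Measurable fun x => g x i j) : Measurable fun x => f x (g x) := by
  have hu : Measurable (Function.uncurry fun (ξ : Fin 3 → Fin 3 → ℝ) x => f x ξ) :=
    measurable_uncurry_of_continuous_of_measurable (ι := Fin 3 → Fin 3 → ℝ) hf.2 hf.1
  exact hu.comp ((measurable_pi_iff.2 fun i => measurable_pi_iff.2 (hg i)).prodMk measurable_id)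

lemma measurable_withCol_gradm (ξα : M32) (φ : V3 → V3) (i j : Fin 3) :
    Measurable fun x => withCol ξα (gradm φ x) i j :=
  ((measurable_pi_apply i).comp (measurable_fderiv_apply_const ℝ φ (Pi.single j 1))).const_add _

lemma abs_gradm_apply_le {K : NNReal} {φ : V3 → V3} (hφ : LipschitzWith K φ) (x : V3)
    (i j : Fin 3) : |gradm φ x i j| ≤ K :=
  calc |gradm φ x i j| = ‖fderiv ℝ φ x (Pi.single j 1) i‖ := rfl
    _ ≤ ‖fderiv ℝ φ x (Pi.single j 1)‖ := norm_le_pi_norm _ i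
    _ ≤ ‖fderiv ℝ φ x‖ * ‖(Pi.single j 1 : V3)‖ := (fderiv ℝ φ x).le_opNorm _
    _ ≤ K := by
      rw [Pi.norm_single, norm_one, mul_one]
      exact norm_fderiv_le_of_lipschitz ℝ hφ

lemma frobNorm_gradm_le {K : NNReal} {φ : V3 → V3} (hφ : LipschitzWith K φ) (x : V3) :
    frobNorm (gradm φ x) ≤ 3 * K := by
  have h := frobNorm_le_of_abs_apply_le K.coe_nonneg (abs_gradm_apply_le hφ x)
  rwa [show √((3 : ℕ) * (3 : ℕ) : ℝ) = 3 by
    rw [show ((3 : ℕ) * (3 : ℕ) : ℝ) = 3 ^ 2 by norm_num]; exact Real.sqrt_sq (by norm_num)] at h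

def embCols (ξα : M32) : M33 := withCol ξα 0

lemma withCol_eq_embCols_add (ξα : M32) (A : M33) : withCol ξα A = embCols ξα + A := by
  ext i j; simp [withCol, embCols]

lemma frobNorm_embCols (ξα : M32) : frobNorm (embCols ξα) = frobNorm ξα := by
  simp [frobNorm, embCols, withCol, Fin.sum_univ_three, Fin.sum_univ_two]

lemma frobNorm_withCol_le (ξα : M32) (A : M33) :
    frobNorm (withCol ξα A) ≤ frobNorm ξα + frobNorm A := by
  rw [withCol_eq_embCols_add, ← frobNorm_embCols ξα]; exact frobNorm_add_le _ _

lemma gradm_const (c : V3) : gradm (fun _ => c) = 0 := by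
  ext x i j; simp [gradm]

lemma openCyl_eq_pi (t : ℝ) :
    openCyl t = univ.pi fun i => Ioo (-(![t, t, 1] i / 2)) (![t, t, 1] i / 2) := by
  ext x
  simp [openCyl, Fin.forall_fin_succ, abs_lt, and_assoc]

lemma measurableSet_openCyl (t : ℝ) : MeasurableSet (openCyl t) := by
  rw [openCyl_eq_pi]; exact MeasurableSet.univ_pi fun _ => measurableSet_Ioo

lemma volume_openCyl {t : ℝ} (ht : 0 ≤ t) : volume (openCyl t) = ENNReal.ofReal (t ^ 2) := by
  rw [openCyl_eq_pi, Real.volume_pi_Ioo, Fin.prod_univ_three]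
  norm_num [← ENNReal.ofReal_mul ht, sq, Matrix.cons_val_two]

lemma openCyl_mono {s t : ℝ} (hst : s ≤ t) : openCyl s ⊆ openCyl t :=
  fun _ hx => ⟨hx.1.trans_le (by linarith), hx.2.1.trans_le (by linarith), hx.2.2⟩

lemma volume_openCyl_lt_top (t : ℝ) : volume (openCyl t) < ⊤ := by
  refine (measure_mono (openCyl_mono (le_abs_self t))).trans_lt ?_
  rw [volume_openCyl (abs_nonneg t)]
  exact ENNReal.ofReal_lt_top

def planarNorm (x : V3) : ℝ := max |x 0| |x 1|

lemma volume_planarNorm_eq (c : ℝ) : volume {x : V3 | planarNorm x = c} = 0 := by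
  have hplane : ∀ (i : Fin 3) (a : ℝ), volume {x : V3 | x i = a} = 0 := fun i a => by
    rw [volume_pi]; exact Measure.pi_hyperplane (fun _ : Fin 3 => (volume : Measure ℝ)) i a
  refine measure_mono_null (t := {x | x 0 = c} ∪ {x | x 0 = -c} ∪ ({x | x 1 = c} ∪ {x | x 1 = -c}))
    (fun x (hx : max |x 0| |x 1| = c) => ?_) ?_
  · have hc : 0 ≤ c := hx ▸ le_max_of_le_left (abs_nonneg _)
    rcases max_choice |x 0| |x 1| with h | h <;> rw [h] at hx <;>
      rcases (abs_eq hc).1 hx with h' | h' <;> simp [h']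
  · simp only [measure_union_null_iff, hplane, and_self]

section Cell

variable {f : V3 → M33 → ℝ} {G : ℝ → ℝ}

lemma cellE_nonneg (hf0 : ∀ᵐ x, ∀ ξ, 0 ≤ f x ξ) (ξα : M32) (t : ℝ) (φ : V3 → V3) :
    0 ≤ cellE f ξα t φ :=
  integral_nonneg_of_ae (ae_restrict_of_ae (hf0.mono fun _ hx => hx _))

lemma const_zero_mem_AdmVSet (t : ℝ) (V : Submodule ℝ V3) : (fun _ => 0) ∈ AdmVSet t V :=
  ⟨⟨⟨0, LipschitzWith.const 0⟩, fun _ _ => rfl⟩, fun _ => V.zero_mem⟩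

lemma cellInf_le_cellE (hf0 : ∀ᵐ x, ∀ ξ, 0 ≤ f x ξ) {ξα : M32} {t : ℝ} {S : Set (V3 → V3)}
    {φ : V3 → V3} (hφ : φ ∈ S) : cellInf f ξα t S ≤ cellE f ξα t φ :=
  csInf_le ⟨0, by rintro _ ⟨ψ, -, rfl⟩; exact cellE_nonneg hf0 ξα t ψ⟩ ⟨φ, hφ, rfl⟩

lemma le_cellInf_AdmVSet {ξα : M32} {t c : ℝ} {V : Submodule ℝ V3}
    (h : ∀ φ ∈ AdmVSet t V, c ≤ cellE f ξα t φ) : c ≤ cellInf f ξα t (AdmVSet t V) :=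
  le_csInf ⟨_, _, const_zero_mem_AdmVSet t V, rfl⟩ (by rintro _ ⟨φ, hφ, rfl⟩; exact h φ hφ)

lemma cellInf_nonneg (hf0 : ∀ᵐ x, ∀ ξ, 0 ≤ f x ξ) (ξα : M32) (t : ℝ) (V : Submodule ℝ V3) :
    0 ≤ cellInf f ξα t (AdmVSet t V) :=
  le_cellInf_AdmVSet fun φ _ => cellE_nonneg hf0 ξα t φ

lemma ae_norm_comp_le (hf0 : ∀ᵐ x, ∀ ξ, 0 ≤ f x ξ) (hfG : ∀ᵐ x, ∀ ξ, f x ξ ≤ G (frobNorm ξ))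
    (hG : MonotoneOn G (Ici 0)) {g : V3 → M33} {s : Set V3} {R : ℝ}
    (hR : ∀ᵐ x ∂volume.restrict s, frobNorm (g x) ≤ R) :
    ∀ᵐ x ∂volume.restrict s, ‖f x (g x)‖ ≤ G R := by
  filter_upwards [ae_restrict_of_ae hf0, ae_restrict_of_ae hfG, hR] with x h0 hG' hxR
  rw [Real.norm_of_nonneg (h0 _)]
  exact (hG' _).trans (hG (frobNorm_nonneg _) ((frobNorm_nonneg _).trans hxR) hxR)

lemma integrableOn_comp_of_frobNorm_le (hf : Caratheodory f) (hf0 : ∀ᵐ x, ∀ ξ, 0 ≤ f x ξ)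
    (hfG : ∀ᵐ x, ∀ ξ, f x ξ ≤ G (frobNorm ξ)) (hG : MonotoneOn G (Ici 0)) {g : V3 → M33}
    (hg : ∀ i j, Measurable fun x => g x i j) {s : Set V3} (hs : volume s < ⊤) {R : ℝ}
    (hR : ∀ᵐ x ∂volume.restrict s, frobNorm (g x) ≤ R) :
    IntegrableOn (fun x => f x (g x)) s :=
  Measure.integrableOn_of_bounded hs.ne (hf.measurable_comp hg).aestronglyMeasurable
    (ae_norm_comp_le hf0 hfG hG hR)

lemma setIntegral_comp_le_of_frobNorm_le (hf0 : ∀ᵐ x, ∀ ξ, 0 ≤ f x ξ)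
    (hfG : ∀ᵐ x, ∀ ξ, f x ξ ≤ G (frobNorm ξ)) (hG : MonotoneOn G (Ici 0)) {g : V3 → M33}
    {s : Set V3} (hs : volume s < ⊤) {R : ℝ}
    (hR : ∀ᵐ x ∂volume.restrict s, frobNorm (g x) ≤ R) :
    ∫ x in s, f x (g x) ≤ G R * volume.real s :=
  (le_abs_self _).trans (norm_setIntegral_le_of_norm_le_const_ae hs (ae_norm_comp_le hf0 hfG hG hR))

lemma scaled_cellInf_le (hf0 : ∀ᵐ x, ∀ ξ, 0 ≤ f x ξ) (hfG : ∀ᵐ x, ∀ ξ, f x ξ ≤ G (frobNorm ξ))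
    (hG : MonotoneOn G (Ici 0)) (ξα : M32) (V : Submodule ℝ V3) {t : ℝ} (ht : 0 < t) :
    (t ^ 2)⁻¹ * cellInf f ξα t (AdmVSet t V) ≤ G (frobNorm ξα) := by
  have hbound : cellE f ξα t (fun _ => 0) ≤ G (frobNorm ξα) * t ^ 2 := by
    have h := setIntegral_comp_le_of_frobNorm_le hf0 hfG hG (volume_openCyl_lt_top t)
      (g := fun x => withCol ξα (gradm (fun _ => (0 : V3)) x)) (R := frobNorm ξα)
      (ae_of_all _ fun x => by rw [gradm_const, Pi.zero_apply, ← embCols, frobNorm_embCols])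
    rwa [Measure.real, volume_openCyl ht.le, ENNReal.toReal_ofReal (by positivity)] at h
  rw [inv_mul_le_iff₀ (by positivity), mul_comm]
  exact (cellInf_le_cellE hf0 (const_zero_mem_AdmVSet t V)).trans hbound

end Cell

lemma LipschitzWith.smul_of_bounded {X F : Type*} [PseudoMetricSpace X]
    [SeminormedAddCommGroup F] [NormedSpace ℝ F] {η : X → ℝ} {g : X → F} {Kη Kg : NNReal}
    {M : ℝ} (hη : LipschitzWith Kη η) (hg : LipschitzWith Kg g) (hη1 : ∀ x, |η x| ≤ 1)
    (hgM : ∀ x, ‖g x‖ ≤ M) : LipschitzWith (Real.toNNReal (Kg + Kη * M)) fun x => η x • g x := by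
  refine LipschitzWith.of_dist_le' fun x y => ?_
  rw [dist_eq_norm, show η x • g x - η y • g y = η x • (g x - g y) + (η x - η y) • g y by
    simp only [smul_sub, sub_smul]; abel]
  calc _ ≤ ‖η x • (g x - g y)‖ + ‖(η x - η y) • g y‖ := norm_add_le _ _
    _ = |η x| * dist (g x) (g y) + dist (η x) (η y) * ‖g y‖ := by
        rw [norm_smul, norm_smul, Real.norm_eq_abs, Real.norm_eq_abs, dist_eq_norm, Real.dist_eq]
    _ ≤ 1 * (Kg * dist x y) + (Kη * dist x y) * M :=
        add_le_add (mul_le_mul (hη1 x) (hg.dist_le_mul x y) dist_nonneg zero_le_one)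
          (mul_le_mul (hη.dist_le_mul x y) (hgM y) (norm_nonneg _) (by positivity))
    _ = (Kg + Kη * M) * dist x y := by ring

lemma norm_mulVec_le_frobNorm {m n : ℕ} (A : Matrix (Fin m) (Fin n) ℝ) (v : Fin n → ℝ) :
    ‖A *ᵥ v‖ ≤ n * frobNorm A * ‖v‖ := by
  refine (pi_norm_le_iff_of_nonneg (by have := frobNorm_nonneg A; positivity)).2 fun i => ?_
  calc ‖(A *ᵥ v) i‖ ≤ ∑ j, |A i j| * ‖v‖ := by
        rw [Real.norm_eq_abs, Matrix.mulVec, dotProduct]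
        refine (Finset.abs_sum_le_sum_abs _ _).trans (Finset.sum_le_sum fun j _ => ?_)
        rw [abs_mul]
        exact mul_le_mul_of_nonneg_left (norm_le_pi_norm v j) (abs_nonneg _)
    _ ≤ ∑ _j : Fin n, frobNorm A * ‖v‖ :=
        Finset.sum_le_sum fun j _ =>
          mul_le_mul_of_nonneg_right (abs_apply_le_frobNorm A i j) (norm_nonneg v)
    _ = n * frobNorm A * ‖v‖ := by simp [mul_assoc]

def clampAbs (r u : ℝ) : ℝ := max (-r) (min r u)

lemma lipschitzWith_clampAbs (r : ℝ) : LipschitzWith 1 (clampAbs r) :=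
  (LipschitzWith.id.const_min r).const_max (-r)

lemma clampAbs_of_abs_le {r u : ℝ} (h : |u| ≤ r) : clampAbs r u = u := by
  rw [clampAbs, min_eq_right (abs_le.1 h).2, max_eq_right (abs_le.1 h).1]

lemma abs_clampAbs_le {r : ℝ} (hr : 0 ≤ r) (u : ℝ) : |clampAbs r u| ≤ r :=
  abs_le.2 ⟨le_max_left _ _, max_le (by linarith) (min_le_left _ _)⟩

lemma abs_clampAbs_of_le_abs {r u : ℝ} (hr : 0 ≤ r) (h : r ≤ |u|) : |clampAbs r u| = r := by
  rcases abs_cases u with ⟨hu, -⟩ | ⟨hu, -⟩ <;> rw [hu] at h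
  · rw [clampAbs, min_eq_left h, max_eq_right (by linarith), abs_of_nonneg hr]
  · rw [clampAbs, min_eq_right (by linarith), max_eq_left (by linarith), abs_neg,
      abs_of_nonneg hr]

def clampPlanar (r : ℝ) (x : V3) : V3 := fun i => if (i : ℕ) < 2 then clampAbs r (x i) else x i

lemma lipschitzWith_clampPlanar (r : ℝ) : LipschitzWith 1 (clampPlanar r) := by
  refine LipschitzWith.of_dist_le_mul fun x y => ?_
  rw [NNReal.coe_one, one_mul, dist_pi_le_iff dist_nonneg]
  intro i
  refine le_trans ?_ (dist_le_pi_dist x y i)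
  unfold clampPlanar
  split_ifs
  · simpa using (lipschitzWith_clampAbs r).dist_le_mul (x i) (y i)
  · exact le_rfl

lemma clampPlanar_apply_two (r : ℝ) (x : V3) : clampPlanar r x 2 = x 2 := by
  simp [clampPlanar]

lemma clampPlanar_of_planarNorm_le {r : ℝ} {x : V3} (h : planarNorm x ≤ r) :
    clampPlanar r x = x := by
  obtain ⟨h0, h1⟩ := max_le_iff.1 h
  funext i
  fin_cases i <;> simp [clampPlanar, clampAbs_of_abs_le h0, clampAbs_of_abs_le h1]

lemma planarNorm_clampPlanar {r : ℝ} (hr : 0 ≤ r) {x : V3} (h : r ≤ planarNorm x) :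
    planarNorm (clampPlanar r x) = r := by
  have h0 : clampPlanar r x 0 = clampAbs r (x 0) := by simp [clampPlanar]
  have h1 : clampPlanar r x 1 = clampAbs r (x 1) := by simp [clampPlanar]
  rw [planarNorm, h0, h1]
  refine le_antisymm (max_le (abs_clampAbs_le hr _) (abs_clampAbs_le hr _)) ?_
  rcases le_max_iff.1 h with h' | h'
  · exact (abs_clampAbs_of_le_abs hr h').ge.trans (le_max_left _ _)
  · exact (abs_clampAbs_of_le_abs hr h').ge.trans (le_max_right _ _)

lemma norm_clampPlanar_comp_castSucc_le {r : ℝ} (hr : 0 ≤ r) (x : V3) :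
    ‖clampPlanar r x ∘ Fin.castSucc‖ ≤ r := by
  refine (pi_norm_le_iff_of_nonneg hr).2 fun j => ?_
  rw [Real.norm_eq_abs, Function.comp_apply, clampPlanar,
    if_pos (show ((Fin.castSucc j : Fin 3) : ℕ) < 2 from j.is_lt)]
  exact abs_clampAbs_le hr _

lemma abs_planarNorm_sub_le (x y : V3) : |planarNorm x - planarNorm y| ≤ dist x y := by
  have hcoord : ∀ i, |(|x i| - |y i|)| ≤ dist x y := fun i =>
    (abs_abs_sub_abs_le_abs_sub _ _).trans
      ((Real.dist_eq _ _).symm.le.trans (dist_le_pi_dist x y i))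
  exact (abs_max_sub_max_le_max _ _ _ _).trans (max_le (hcoord 0) (hcoord 1))

lemma continuous_planarNorm : Continuous planarNorm :=
  ((continuous_apply 0).abs).max ((continuous_apply 1).abs)

def planarLinear (Δ : M32) : V3 →L[ℝ] V3 :=
  LinearMap.toContinuousLinearMap (Matrix.toLin' Δ ∘ₗ LinearMap.funLeft ℝ ℝ Fin.castSucc)

lemma planarLinear_apply (Δ : M32) (x : V3) : planarLinear Δ x = Δ *ᵥ (x ∘ Fin.castSucc) := rfl

lemma planarLinear_single_apply (Δ : M32) (i j : Fin 3) :
    planarLinear Δ (Pi.single j 1) i = embCols Δ i j := by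
  rw [planarLinear_apply]
  fin_cases j <;> simp [embCols, withCol, Matrix.mulVec, dotProduct, Fin.sum_univ_two]

lemma norm_planarLinear_le (Δ : M32) (x : V3) :
    ‖planarLinear Δ x‖ ≤ 2 * frobNorm Δ * ‖x ∘ Fin.castSucc‖ := by
  have h := norm_mulVec_le_frobNorm Δ (x ∘ Fin.castSucc)
  rwa [Nat.cast_ofNat] at h

lemma lipschitzWith_planarLinear (Δ : M32) :
    LipschitzWith (Real.toNNReal (2 * frobNorm Δ)) (planarLinear Δ) := by
  refine LipschitzWith.of_dist_le' fun x y => ?_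
  rw [dist_eq_norm, dist_eq_norm, ← map_sub]
  refine (norm_planarLinear_le Δ _).trans ?_
  refine mul_le_mul_of_nonneg_left ?_ (by have := frobNorm_nonneg Δ; positivity)
  exact (pi_norm_le_iff_of_nonneg (norm_nonneg _)).2 fun j =>
    norm_le_pi_norm (x - y) (Fin.castSucc j)

def cutoff (s t : ℝ) (x : V3) : ℝ := max 0 (min 1 ((t - 2 * planarNorm x) / (t - s)))

lemma abs_cutoff_le_one (s t : ℝ) (x : V3) : |cutoff s t x| ≤ 1 :=
  abs_le.2 ⟨(neg_nonpos.2 zero_le_one).trans (le_max_left _ _),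
    max_le zero_le_one (min_le_left _ _)⟩

lemma lipschitzWith_cutoff {s t : ℝ} (hst : s < t) :
    LipschitzWith (Real.toNNReal (2 / (t - s))) (cutoff s t) := by
  refine LipschitzWith.of_dist_le' fun x y => ?_
  have hclamp := ((LipschitzWith.id.const_min (1 : ℝ)).const_max (0 : ℝ)).dist_le_mul
    ((t - 2 * planarNorm x) / (t - s)) ((t - 2 * planarNorm y) / (t - s))
  simp only [id, NNReal.coe_one, one_mul] at hclamp
  rw [Real.dist_eq (_ / _), ← sub_div, abs_div, abs_of_pos (sub_pos.2 hst),
    show t - 2 * planarNorm x - (t - 2 * planarNorm y) = 2 * (planarNorm y - planarNorm x) by ring,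
    abs_mul, abs_two, abs_sub_comm] at hclamp
  calc dist (cutoff s t x) (cutoff s t y) ≤ 2 * |planarNorm x - planarNorm y| / (t - s) := hclamp
    _ ≤ 2 * dist x y / (t - s) := by
      gcongr
      exact abs_planarNorm_sub_le x y
    _ = 2 / (t - s) * dist x y := by ring

lemma cutoff_of_planarNorm_le {s t : ℝ} (hst : s < t) {x : V3} (h : planarNorm x ≤ s / 2) :
    cutoff s t x = 1 := by
  have : 1 ≤ (t - 2 * planarNorm x) / (t - s) := by
    rw [le_div_iff₀ (sub_pos.2 hst)]; linarith
  rw [cutoff, min_eq_left this, max_eq_right zero_le_one]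

lemma cutoff_of_planarNorm_eq {s t : ℝ} {x : V3} (h : planarNorm x = t / 2) :
    cutoff s t x = 0 := by
  rw [cutoff, h, show t - 2 * (t / 2) = 0 by ring, zero_div, min_eq_right zero_le_one, max_self]

def corrector (Δ : M32) (s t : ℝ) (x : V3) : V3 :=
  cutoff s t x • planarLinear Δ (clampPlanar (t / 2) x)

lemma lipschitzWith_corrector (Δ : M32) {s t : ℝ} (hs : 0 < s) (hst : s < t) :
    LipschitzWith (Real.toNNReal (2 * frobNorm Δ + 2 * frobNorm Δ * t / (t - s)))
      (corrector Δ s t) := by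
  have hbound : ∀ x, ‖planarLinear Δ (clampPlanar (t / 2) x)‖ ≤ 2 * frobNorm Δ * (t / 2) :=
    fun x => (norm_planarLinear_le Δ _).trans (mul_le_mul_of_nonneg_left
      (norm_clampPlanar_comp_castSucc_le (by linarith) x)
      (by have := frobNorm_nonneg Δ; positivity))
  refine ((lipschitzWith_cutoff hst).smul_of_bounded
    ((lipschitzWith_planarLinear Δ).comp (lipschitzWith_clampPlanar (t / 2)))
    (fun x => abs_cutoff_le_one s t x) hbound).weaken (le_of_eq (congrArg _ ?_))
  have := frobNorm_nonneg Δ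
  rw [mul_one, Real.coe_toNNReal _ (by positivity),
    Real.coe_toNNReal _ (div_nonneg zero_le_two (sub_pos.2 hst).le)]
  field_simp

lemma mulVec_mem_of_colsIn {V : Submodule ℝ V3} {Δ : M32} (hΔ : colsIn V Δ) (v : V2) :
    Δ *ᵥ v ∈ V := by
  have : Δ *ᵥ v = ∑ j, v j • fun i => Δ i j := by
    ext i; simp [Matrix.mulVec, dotProduct, Finset.sum_apply, mul_comm]
  rw [this]
  exact V.sum_mem fun j _ => V.smul_mem _ (hΔ j)

lemma corrector_of_planarNorm_le (Δ : M32) {s t : ℝ} (hst : s < t) {x : V3}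
    (h : planarNorm x ≤ s / 2) : corrector Δ s t x = planarLinear Δ x := by
  rw [corrector, cutoff_of_planarNorm_le hst h, one_smul,
    clampPlanar_of_planarNorm_le (h.trans (by linarith))]

lemma clampPlanar_mem_latBdry {s : ℝ} (hs : 0 ≤ s) {x : V3} (h : s / 2 ≤ planarNorm x)
    (hx2 : |x 2| < 1 / 2) : clampPlanar (s / 2) x ∈ latBdry s :=
  ⟨planarNorm_clampPlanar (by linarith) h, by rwa [clampPlanar_apply_two]⟩

def extendMap (φ : V3 → V3) (Δ : M32) (s t : ℝ) (x : V3) : V3 :=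
  φ (clampPlanar (s / 2) x) + corrector Δ s t x

lemma extendMap_mem_AdmVSet {V : Submodule ℝ V3} {φ : V3 → V3} {Δ : M32} {s t : ℝ}
    (hs : 0 < s) (hst : s < t) (hφ : φ ∈ AdmVSet s V) (hΔ : colsIn V Δ) :
    extendMap φ Δ s t ∈ AdmVSet t V := by
  obtain ⟨⟨⟨K, hK⟩, hφ0⟩, hφV⟩ := hφ
  refine ⟨⟨⟨_, (hK.comp (lipschitzWith_clampPlanar _)).add (lipschitzWith_corrector Δ hs hst)⟩,
    fun x hx => ?_⟩, fun x => V.add_mem (hφV _) (V.smul_mem _ (mulVec_mem_of_colsIn hΔ _))⟩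
  have hx' : planarNorm x = t / 2 := hx.1
  rw [extendMap, corrector, cutoff_of_planarNorm_eq hx', zero_smul, add_zero,
    hφ0 _ (clampPlanar_mem_latBdry hs.le (by linarith) hx.2)]

lemma gradm_eq_of_eqOn {φ ψ : V3 → V3} {U : Set V3} (hU : IsOpen U) (h : EqOn φ ψ U) {x : V3}
    (hx : x ∈ U) : gradm φ x = gradm ψ x := by
  simp only [gradm, (h.eventuallyEq_of_mem (hU.mem_nhds hx)).fderiv_eq]

lemma gradm_add_planarLinear {φ : V3 → V3} {x : V3} (hφ : DifferentiableAt ℝ φ x) (Δ : M32) :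
    gradm (fun y => φ y + planarLinear Δ y) x = gradm φ x + embCols Δ := by
  have hd : fderiv ℝ (fun y => φ y + planarLinear Δ y) x = fderiv ℝ φ x + planarLinear Δ :=
    (hφ.hasFDerivAt.add (planarLinear Δ).hasFDerivAt).fderiv
  ext i j
  simp [gradm, hd, planarLinear_single_apply]

lemma withCol_add_embCols (ξα Δ : M32) (A : M33) :
    withCol ξα (A + embCols Δ) = withCol (ξα + Δ) A := by
  ext i j; simp only [withCol, embCols, Matrix.of_apply, Matrix.add_apply,
    Matrix.zero_apply]
  split_ifs <;> ring

lemma withCol_gradm_extendMap_of_inner {φ : V3 → V3} (ξα Δ : M32) {s t : ℝ} (hst : s < t)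
    {x : V3} (hx : planarNorm x < s / 2) (hφx : DifferentiableAt ℝ φ x) :
    withCol ξα (gradm (extendMap φ Δ s t) x) = withCol (ξα + Δ) (gradm φ x) := by
  have hinner : EqOn (extendMap φ Δ s t) (fun y => φ y + planarLinear Δ y)
      {y | planarNorm y < s / 2} := fun y (hy : planarNorm y < s / 2) => by
    rw [extendMap, clampPlanar_of_planarNorm_le hy.le, corrector_of_planarNorm_le Δ hst hy.le]
  rw [gradm_eq_of_eqOn (isOpen_lt continuous_planarNorm continuous_const) hinner hx,
    gradm_add_planarLinear hφx, withCol_add_embCols]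

lemma frobNorm_withCol_gradm_extendMap_of_frame {s t : ℝ} {φ : V3 → V3}
    (hφ0 : ∀ x ∈ latBdry s, φ x = 0) (ξα Δ : M32) (hs : 0 < s) (hst : s < t) {x : V3}
    (hx : s / 2 < planarNorm x) (hx2 : |x 2| < 1 / 2) :
    frobNorm (withCol ξα (gradm (extendMap φ Δ s t) x)) ≤
      frobNorm ξα + 3 * (2 * frobNorm Δ + 2 * frobNorm Δ * t / (t - s)) := by
  have hframe : EqOn (extendMap φ Δ s t) (corrector Δ s t)
      {y | s / 2 < planarNorm y ∧ |y 2| < 1 / 2} := fun y hy => by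
    rw [extendMap, hφ0 _ (clampPlanar_mem_latBdry hs.le hy.1.le hy.2), zero_add]
  have hopen : IsOpen {y : V3 | s / 2 < planarNorm y ∧ |y 2| < 1 / 2} :=
    (isOpen_lt continuous_const continuous_planarNorm).inter
      (isOpen_lt (continuous_apply 2).abs continuous_const)
  have hK : (0 : ℝ) ≤ 2 * frobNorm Δ + 2 * frobNorm Δ * t / (t - s) := by
    have := frobNorm_nonneg Δ
    have : 0 < t - s := sub_pos.2 hst
    have : 0 < t := hs.trans hst
    positivity
  refine (frobNorm_withCol_le _ _).trans (add_le_add_right ?_ _)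
  rw [gradm_eq_of_eqOn hopen hframe ⟨hx, hx2⟩, ← Real.coe_toNNReal _ hK]
  exact frobNorm_gradm_le (lipschitzWith_corrector Δ hs hst) x

lemma volume_real_openCyl {t : ℝ} (ht : 0 ≤ t) : volume.real (openCyl t) = t ^ 2 := by
  rw [Measure.real, volume_openCyl ht, ENNReal.toReal_ofReal (by positivity)]

lemma ae_mem_frame_of_mem_diff (s t : ℝ) :
    ∀ᵐ x ∂volume.restrict (openCyl t \ openCyl s), s / 2 < planarNorm x ∧ |x 2| < 1 / 2 := by
  have hnull : ∀ᵐ x : V3, planarNorm x ≠ s / 2 :=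
    measure_eq_zero_iff_ae_notMem.1 (volume_planarNorm_eq (s / 2))
  filter_upwards [ae_restrict_of_ae hnull,
    ae_restrict_mem ((measurableSet_openCyl t).diff (measurableSet_openCyl s))] with x hne hx
  refine ⟨lt_of_le_of_ne (not_lt.1 fun hlt => hx.2 ?_) hne.symm, hx.1.2.2⟩
  exact ⟨(le_max_left _ _).trans_lt hlt, (le_max_right _ _).trans_lt hlt, hx.1.2.2⟩

section Comparison

variable {f : V3 → M33 → ℝ} {G : ℝ → ℝ}

lemma cellE_extendMap_le (hf : Caratheodory f) (hf0 : ∀ᵐ x, ∀ ξ, 0 ≤ f x ξ)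
    (hfG : ∀ᵐ x, ∀ ξ, f x ξ ≤ G (frobNorm ξ)) (hG : MonotoneOn G (Ici 0))
    {V : Submodule ℝ V3} {φ : V3 → V3} {s t : ℝ} (hφ : φ ∈ AdmVSet s V) {ξα Δ : M32}
    (hΔ : colsIn V Δ) (hs : 0 < s) (hst : s < t) :
    cellE f ξα t (extendMap φ Δ s t) ≤ cellE f (ξα + Δ) s φ +
      G (frobNorm ξα + 3 * (2 * frobNorm Δ + 2 * frobNorm Δ * t / (t - s))) * (t ^ 2 - s ^ 2) := by
  set ψ := extendMap φ Δ s t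
  set g : V3 → M33 := fun x => withCol ξα (gradm ψ x)
  obtain ⟨⟨⟨K, hK⟩, -⟩, -⟩ := extendMap_mem_AdmVSet hs hst hφ hΔ
  have hint : IntegrableOn (fun x => f x (g x)) (openCyl t) :=
    integrableOn_comp_of_frobNorm_le hf hf0 hfG hG (measurable_withCol_gradm ξα ψ)
      (volume_openCyl_lt_top t) (ae_of_all _ fun x =>
        (frobNorm_withCol_le _ _).trans (add_le_add le_rfl (frobNorm_gradm_le hK x)))
  have hsplit : cellE f ξα t ψ =
      (∫ x in openCyl s, f x (g x)) + ∫ x in openCyl t \ openCyl s, f x (g x) := by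
    rw [setIntegral_sdiff (measurableSet_openCyl s) hint (openCyl_mono hst.le), cellE]
    ring
  -- Rademacher's theorem for the Lipschitz map `φ`.
  have hinner : ∫ x in openCyl s, f x (g x) = cellE f (ξα + Δ) s φ := by
    refine setIntegral_congr_ae (measurableSet_openCyl s) ?_
    filter_upwards [hφ.1.1.choose_spec.ae_differentiableAt] with x hdiff hx
    exact congrArg (f x) (withCol_gradm_extendMap_of_inner ξα Δ hst (max_lt hx.1 hx.2.1) hdiff)
  have hframe := setIntegral_comp_le_of_frobNorm_le hf0 hfG hG
    ((measure_mono sdiff_subset).trans_lt (volume_openCyl_lt_top t))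
    ((ae_mem_frame_of_mem_diff s t).mono fun x hx =>
      frobNorm_withCol_gradm_extendMap_of_frame hφ.1.2 ξα Δ hs hst hx.1 hx.2)
  rw [measureReal_sdiff (openCyl_mono hst.le) (measurableSet_openCyl s)
      (volume_openCyl_lt_top t).ne,
    volume_real_openCyl (hs.trans hst).le, volume_real_openCyl hs.le] at hframe
  rw [hsplit, hinner]
  exact add_le_add le_rfl hframe

lemma cellInf_le_cellInf_add (hf : Caratheodory f) (hf0 : ∀ᵐ x, ∀ ξ, 0 ≤ f x ξ)
    (hfG : ∀ᵐ x, ∀ ξ, f x ξ ≤ G (frobNorm ξ)) (hG : MonotoneOn G (Ici 0))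
    {V : Submodule ℝ V3} {ξα ξα' : M32} (hc : colsIn V ξα) (hc' : colsIn V ξα') {s t : ℝ}
    (hs : 0 < s) (hst : s < t) :
    cellInf f ξα t (AdmVSet t V) ≤ cellInf f ξα' s (AdmVSet s V) +
      G (frobNorm ξα + 3 * (2 * frobNorm (ξα' - ξα) + 2 * frobNorm (ξα' - ξα) * t / (t - s))) *
        (t ^ 2 - s ^ 2) := by
  rw [← sub_le_iff_le_add]
  refine le_cellInf_AdmVSet fun φ hφ => sub_le_iff_le_add.2 ?_
  have hΔ : colsIn V (ξα' - ξα) := fun j => V.sub_mem (hc' j) (hc j)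
  calc cellInf f ξα t (AdmVSet t V) ≤ cellE f ξα t (extendMap φ (ξα' - ξα) s t) :=
        cellInf_le_cellE hf0 (extendMap_mem_AdmVSet hs hst hφ hΔ)
    _ ≤ _ := by simpa using cellE_extendMap_le (ξα := ξα) hf hf0 hfG hG hφ hΔ hs hst

end Comparison

lemma liminf_le_liminf_add_of_le_comp_mul {h g : ℝ → ℝ} {c l : ℝ} (hl : 0 < l)
    (hh : IsBoundedUnder (· ≥ ·) atTop h) (hg : IsCoboundedUnder (· ≥ ·) atTop g)
    (hle : ∀ᶠ t in atTop, h t ≤ g (l * t) + c) :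
    liminf h atTop ≤ liminf g atTop + c := by
  refine le_of_forall_pos_le_add fun ε hε => liminf_le_of_frequently_le ?_ hh
  have hfreq : ∃ᶠ t in atTop, g (l * t) < liminf g atTop + ε := by
    have hmap : map (l * ·) atTop = atTop := (OrderIso.mulLeft₀ l hl).map_atTop
    refine frequently_map (m := (l * ·)) (P := fun v => g v < liminf g atTop + ε) |>.1 ?_
    rw [hmap]
    exact frequently_lt_of_liminf_lt hg (lt_add_of_pos_right _ hε)
  exact (hfreq.and_eventually hle).mono fun t ht => by linarith [ht.1, ht.2]

section Homogenized

variable {f : V3 → M33 → ℝ} {G : ℝ → ℝ}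

lemma Tf0hom_le_add (hf : Caratheodory f) (hf0 : ∀ᵐ x, ∀ ξ, 0 ≤ f x ξ)
    (hfG : ∀ᵐ x, ∀ ξ, f x ξ ≤ G (frobNorm ξ)) (hG : MonotoneOn G (Ici 0))
    {V : Submodule ℝ V3} {ξα ξα' : M32} (hc : colsIn V ξα) (hc' : colsIn V ξα') {θ : ℝ}
    (hθ0 : 0 < θ) (hθ1 : θ < 1) :
    Tf0hom f V ξα ≤ Tf0hom f V ξα' + (1 - (1 - θ) ^ 2) *
      G (frobNorm ξα + 3 * (2 * frobNorm (ξα' - ξα) + 2 * frobNorm (ξα' - ξα) / θ)) := by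
  set B := G (frobNorm ξα + 3 * (2 * frobNorm (ξα' - ξα) + 2 * frobNorm (ξα' - ξα) / θ))
  have hbelow : IsBoundedUnder (· ≥ ·) atTop fun t => (t ^ 2)⁻¹ * cellInf f ξα t (AdmVSet t V) :=
    isBoundedUnder_of_eventually_ge (a := 0) (Eventually.of_forall fun t =>
      mul_nonneg (inv_nonneg.2 (sq_nonneg t)) (cellInf_nonneg hf0 ξα t V))
  have habove : IsBoundedUnder (· ≤ ·) atTop fun t => (t ^ 2)⁻¹ * cellInf f ξα' t (AdmVSet t V) :=
    isBoundedUnder_of_eventually_le ((eventually_gt_atTop 0).mono fun t ht =>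
      scaled_cellInf_le hf0 hfG hG ξα' V ht)
  refine liminf_le_liminf_add_of_le_comp_mul (sub_pos.2 hθ1) hbelow habove.isCoboundedUnder_ge
    ((eventually_gt_atTop 0).mono fun t ht => ?_)
  have hs : 0 < (1 - θ) * t := mul_pos (sub_pos.2 hθ1) ht
  have hst : (1 - θ) * t < t := by nlinarith
  have hcomp := cellInf_le_cellInf_add hf hf0 hfG hG hc hc' hs hst
  rw [show 2 * frobNorm (ξα' - ξα) * t / (t - (1 - θ) * t) = 2 * frobNorm (ξα' - ξα) / θ by
    rw [show t - (1 - θ) * t = θ * t by ring]; field_simp] at hcomp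
  have hscale : (t ^ 2)⁻¹ * cellInf f ξα' ((1 - θ) * t) (AdmVSet ((1 - θ) * t) V) ≤
      (((1 - θ) * t) ^ 2)⁻¹ * cellInf f ξα' ((1 - θ) * t) (AdmVSet ((1 - θ) * t) V) := by
    gcongr
    exact cellInf_nonneg hf0 _ _ V
  calc (t ^ 2)⁻¹ * cellInf f ξα t (AdmVSet t V)
      ≤ (t ^ 2)⁻¹ * (cellInf f ξα' ((1 - θ) * t) (AdmVSet ((1 - θ) * t) V) +
          B * (t ^ 2 - ((1 - θ) * t) ^ 2)) := by gcongr
    _ = (t ^ 2)⁻¹ * cellInf f ξα' ((1 - θ) * t) (AdmVSet ((1 - θ) * t) V) +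
          (1 - (1 - θ) ^ 2) * B := by field_simp
    _ ≤ _ := by linarith

end Homogenized

lemma H2growth.ae_nonneg {Φ φ : ℝ → ℝ} {α β : ℝ} {f : V3 → M33 → ℝ} (hf2 : H2growth Φ α β f)
    (hα : 0 ≤ α) (hΦ : HasMonotoneDensity Φ φ) : ∀ᵐ x, ∀ ξ, 0 ≤ f x ξ :=
  hf2.mono fun _ hx ξ => (mul_nonneg hα (hΦ.nonneg (frobNorm_nonneg ξ))).trans (hx ξ).1

lemma HasMonotoneDensity.one_sub_sq_mul_growth_le {Φ φ : ℝ → ℝ} (hΦ : HasMonotoneDensity Φ φ)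
    {β a D S θ : ℝ} (hβ : 0 ≤ β) (ha : 0 ≤ a) (haS : a ≤ S) (hDS : D ≤ S) (hθ0 : 0 < θ)
    (hθ : 2 * θ * (S + 1) = D) :
    (1 - (1 - θ) ^ 2) * (β * (1 + Φ (a + 3 * (2 * D + 2 * D / θ)))) ≤
      β * D * (1 + 19 * φ (19 * (S + 1))) := by
  have hS : 0 ≤ S := ha.trans haS
  have hD : 0 < D := by rw [← hθ]; positivity
  have hR : a + 3 * (2 * D + 2 * D / θ) ≤ 19 * (S + 1) := by
    rw [show 2 * D / θ = 4 * (S + 1) by field_simp; linarith]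
    linarith
  have hR0 : 0 ≤ a + 3 * (2 * D + 2 * D / θ) := by positivity
  have hΦR : Φ (a + 3 * (2 * D + 2 * D / θ)) ≤ 19 * (S + 1) * φ (19 * (S + 1)) :=
    (hΦ.monotoneOn hR0 (mem_Ici.2 (by positivity)) hR).trans (hΦ.le_mul_density (by positivity))
  have hφ₁ : 0 ≤ φ (19 * (S + 1)) := hΦ.density_nonneg (by positivity)
  calc (1 - (1 - θ) ^ 2) * (β * (1 + Φ (a + 3 * (2 * D + 2 * D / θ))))
      ≤ 2 * θ * (β * (1 + 19 * (S + 1) * φ (19 * (S + 1)))) := by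
        gcongr
        · exact mul_nonneg hβ (by linarith [hΦ.nonneg hR0])
        · nlinarith
    _ = β * D * (1 / (S + 1) + 19 * φ (19 * (S + 1))) := by
        rw [← hθ]; field_simp
    _ ≤ β * D * (1 + 19 * φ (19 * (S + 1))) := by
        gcongr
        exact div_le_one_of_le₀ (by linarith) (by positivity)

lemma Tf0hom_le_add_of_hasMonotoneDensity {Φ φ : ℝ → ℝ} (hΦ : HasMonotoneDensity Φ φ)
    {f : V3 → M33 → ℝ} (hf : Caratheodory f) {α β : ℝ} (hα : 0 < α) (hαβ : α ≤ β)
    (hf2 : H2growth Φ α β f) {V : Submodule ℝ V3} {ξα ξα' : M32} (hc : colsIn V ξα)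
    (hc' : colsIn V ξα') {S : ℝ} (hξ : frobNorm ξα ≤ S) (hD : frobNorm (ξα' - ξα) ≤ S) :
    Tf0hom f V ξα ≤ Tf0hom f V ξα' +
      β * frobNorm (ξα' - ξα) * (1 + 19 * φ (19 * (S + 1))) := by
  rcases (frobNorm_nonneg (ξα' - ξα)).eq_or_lt with hD0 | hD0
  · obtain rfl := frobNorm_sub_eq_zero_iff.1 hD0.symm
    rw [← hD0]
    simp
  have hS : 0 ≤ S := (frobNorm_nonneg ξα).trans hξ
  have hβ : 0 ≤ β := hα.le.trans hαβ
  have hG : MonotoneOn (fun r => β * (1 + Φ r)) (Ici 0) := fun a ha b hb hab =>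
    mul_le_mul_of_nonneg_left (add_le_add le_rfl (hΦ.monotoneOn ha hb hab)) hβ
  set θ := frobNorm (ξα' - ξα) / (2 * (S + 1)) with hθdef
  have hθ0 : 0 < θ := by positivity
  have hθ : 2 * θ * (S + 1) = frobNorm (ξα' - ξα) := by rw [hθdef]; field_simp
  have hθ1 : θ < 1 := by nlinarith
  exact (Tf0hom_le_add hf (hf2.ae_nonneg hα.le hΦ) (hf2.mono fun _ hx ξ => (hx ξ).2) hG hc hc'
    hθ0 hθ1).trans (add_le_add le_rfl
      (hΦ.one_sub_sq_mul_growth_le hβ (frobNorm_nonneg ξα) hξ hD hθ0 hθ))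

theorem stmt_6_general
    (Φ φ : ℝ → ℝ) (hΔ : Delta2 Φ)
    (hrep : ∀ t : ℝ, 0 ≤ t → Φ t = ∫ s in (0:ℝ)..t, φ s)
    (hmono : MonotoneOn φ (Set.Ici 0))
    (hφ0 : φ 0 = 0)
    (f : V3 → M33 → ℝ) (hf : Caratheodory f)
    (α β : ℝ) (hα : 0 < α) (hαβ : α ≤ β) (hf2 : H2growth Φ α β f) :
    ∃ C : ℝ, 0 < C ∧
      ∀ (V : Submodule ℝ V3) (ξα ξα' : M32), colsIn V ξα → colsIn V ξα' →
        |Tf0hom f V ξα - Tf0hom f V ξα'| ≤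
          C * frobNorm (ξα - ξα') * (1 + φ (frobNorm ξα + frobNorm ξα')) := by
  have hΦ : HasMonotoneDensity Φ φ := ⟨hrep, hmono, hφ0⟩
  obtain ⟨C, hC, hφC⟩ := hΦ.exists_density_le_of_delta2 hΔ (by norm_num : (0 : ℝ) ≤ 19)
  have hβ : 0 < β := hα.trans_le hαβ
  refine ⟨β * (1 + 19 * C), by positivity, fun V ξα ξα' hc hc' => ?_⟩
  set S := frobNorm ξα + frobNorm ξα'
  have hξ : frobNorm ξα ≤ S := le_add_of_nonneg_right (frobNorm_nonneg ξα')
  have hξ' : frobNorm ξα' ≤ S := le_add_of_nonneg_left (frobNorm_nonneg ξα)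
  have hD : frobNorm (ξα - ξα') ≤ S := frobNorm_sub_le ξα ξα'
  have hS : 0 ≤ S := (frobNorm_nonneg ξα).trans hξ
  have h₁ := Tf0hom_le_add_of_hasMonotoneDensity hΦ hf hα hαβ hf2 hc hc' hξ
    (by rwa [frobNorm_sub_comm])
  have h₂ := Tf0hom_le_add_of_hasMonotoneDensity hΦ hf hα hαβ hf2 hc' hc hξ' hD
  rw [frobNorm_sub_comm] at h₁
  have hmod : 1 + 19 * φ (19 * (S + 1)) ≤ (1 + 19 * C) * (1 + φ S) := by
    nlinarith [hφC S hS, hΦ.density_nonneg hS]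
  have := mul_le_mul_of_nonneg_left hmod (mul_nonneg hβ.le (frobNorm_nonneg (ξα - ξα')))
  exact abs_sub_le_iff.2 ⟨by linarith, by linarith⟩

/-- Lipschitz-type estimate for `Tf⁰hom`, with modulus expressed through the
right-continuous density `φ` of `Φ`. -/
theorem stmt_6
    (Φ φ : ℝ → ℝ) (hΦ : IsYoung Φ) (hΔ : Delta2 Φ) (hΝ : Nabla2 Φ)
    (hrep : ∀ t : ℝ, 0 ≤ t → Φ t = ∫ s in (0:ℝ)..t, φ s)
    (hmono : MonotoneOn φ (Set.Ici 0))
    (hrc : ∀ s : ℝ, 0 ≤ s → ContinuousWithinAt φ (Set.Ici s) s)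
    (hφ0 : φ 0 = 0) (hφpos : ∀ s : ℝ, 0 < s → 0 < φ s)
    (hφtop : Tendsto φ atTop atTop)
    (f : V3 → M33 → ℝ) (hf : Caratheodory f) (hf1 : H1per f)
    (α β : ℝ) (hα : 0 < α) (hαβ : α ≤ β) (hf2 : H2growth Φ α β f) :
    ∃ C : ℝ, 0 < C ∧
      ∀ (V : Submodule ℝ V3) (ξα ξα' : M32), colsIn V ξα → colsIn V ξα' →
        |Tf0hom f V ξα - Tf0hom f V ξα'| ≤
          C * frobNorm (ξα - ξα') * (1 + φ (frobNorm ξα + frobNorm ξα')) :=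
  stmt_6_general Φ φ hΔ hrep hmono hφ0 f hf α β hα hαβ hf2
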